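/- Let 0 < p < 1/2 and q = 1 − p. Let Q_k(z) be the polynomials defined by Q_{−1}(z) = 0, Q_0(z) = 1, and Q_k(z) = Q_{k−1}(z) − p q z² Q_{k−2}(z) + p^{k−1} z^k for k ≥ 1. Then for every real z with 0 < z < 1/(2√(pq)) and z ≠ 1, setting t = √(1 − 4 p q z²), u = ((1+t)/(2p))(−1 + 2p + t) and v = ((1−t)/(2p))(1 − 2p + t), one has for all k ≥ 0: Q_k(z) = (1/(2t(1−z))) [ u ((1+t)/2)^k + v ((1−t)/2)^k − 2 t z (p z)^k ]. -/

import Mathlib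

/-- Index-shifted numerator polynomials for the strong scenario:
`Qrec p z (k+1)` is the quantity `Q_k(z)` of the paper, so `Q_{-1}(z) = 0`,
`Q_0(z) = 1`, and `Q_k(z) = Q_{k-1}(z) - p(1-p) z² Q_{k-2}(z) + p^{k-1} z^k` for `k ≥ 1`. -/
noncomputable def Qrec (p z : ℝ) : ℕ → ℝ
  | 0 => 0
  | 1 => 1
  | (k + 2) => Qrec p z (k + 1) - p * (1 - p) * z ^ 2 * Qrec p z k + p ^ k * z ^ (k + 1)

/-!
The roots of `X² - X + p q z²` are `(1 ± t)/2`, so `Q_k` is a combination of their `k`-th powers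
plus a particular solution for the forcing term `p^{k-1} z^k`; since `(pz)² - pz + pqz² = pz(z - 1)`,
that particular solution is `-z/(1-z) · (pz)^k`. The coefficients `u, v` are then fixed by
`Q_0 = 1` and `Q_1 = 1 + z`, and a second-order recurrence is determined by two initial values.
-/

section SecondOrderRecurrence

variable {R : Type*} [Ring R]

def recurrenceDefect (s c : R) (f : ℕ → R) (n : ℕ) : R :=
  f (n + 2) - s * f (n + 1) + c * f n

theorem eq_of_recurrenceDefect_eq {s c : R} {f g : ℕ → R}
    (hdef : recurrenceDefect s c f = recurrenceDefect s c g) (h0 : f 0 = g 0) (h1 : f 1 = g 1) :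
    f = g := by
  funext n
  induction n using Nat.twoStepInduction with
  | zero => exact h0
  | one => exact h1
  | more n ihn ihn1 =>
    have := congrFun hdef n
    simp only [recurrenceDefect, ihn, ihn1] at this
    simpa only [add_left_inj, sub_left_inj] using this

end SecondOrderRecurrence

theorem recurrenceDefect_Qrec (p z : ℝ) (n : ℕ) :
    recurrenceDefect 1 (p * (1 - p) * z ^ 2) (fun k => Qrec p z (k + 1)) n =
      z * (p * z) ^ (n + 1) := by
  simp only [recurrenceDefect, Qrec]
  ring

noncomputable def strongClosedForm (p z t : ℝ) (k : ℕ) : ℝ :=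
  1 / (2 * t * (1 - z)) *
    ((1 + t) / (2 * p) * (-1 + 2 * p + t) * ((1 + t) / 2) ^ k +
      (1 - t) / (2 * p) * (1 - 2 * p + t) * ((1 - t) / 2) ^ k - 2 * t * z * (p * z) ^ k)

section StrongClosedForm

variable {p z t : ℝ} (hp : p ≠ 0) (hz : 1 - z ≠ 0) (ht : t ≠ 0)
  (ht2 : t ^ 2 = 1 - 4 * p * (1 - p) * z ^ 2)
include hp hz ht

theorem strongClosedForm_zero : strongClosedForm p z t 0 = 1 := by
  simp only [strongClosedForm]
  field_simp
  ring

include ht2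

theorem strongClosedForm_one : strongClosedForm p z t 1 = 1 + z := by
  simp only [strongClosedForm]
  field_simp
  linear_combination 2 * t * ht2

theorem recurrenceDefect_strongClosedForm (n : ℕ) :
    recurrenceDefect 1 (p * (1 - p) * z ^ 2) (strongClosedForm p z t) n =
      z * (p * z) ^ (n + 1) := by
  have hplus : ((1 + t) / 2) ^ 2 - (1 + t) / 2 + p * (1 - p) * z ^ 2 = 0 := by
    linear_combination ht2 / 4
  have hminus : ((1 - t) / 2) ^ 2 - (1 - t) / 2 + p * (1 - p) * z ^ 2 = 0 := by
    linear_combination ht2 / 4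
  have hpz : (p * z) ^ 2 - p * z + p * (1 - p) * z ^ 2 = p * z * (z - 1) := by ring
  have hsplit : recurrenceDefect 1 (p * (1 - p) * z ^ 2) (strongClosedForm p z t) n =
      1 / (2 * t * (1 - z)) *
        ((1 + t) / (2 * p) * (-1 + 2 * p + t) * ((1 + t) / 2) ^ n *
            (((1 + t) / 2) ^ 2 - (1 + t) / 2 + p * (1 - p) * z ^ 2) +
          (1 - t) / (2 * p) * (1 - 2 * p + t) * ((1 - t) / 2) ^ n *
            (((1 - t) / 2) ^ 2 - (1 - t) / 2 + p * (1 - p) * z ^ 2) -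
          2 * t * z * (p * z) ^ n * ((p * z) ^ 2 - p * z + p * (1 - p) * z ^ 2)) := by
    simp only [recurrenceDefect, strongClosedForm]
    ring
  rw [hsplit, hplus, hminus, hpz]
  field_simp
  ring

theorem Qrec_succ_eq_strongClosedForm (k : ℕ) : Qrec p z (k + 1) = strongClosedForm p z t k := by
  suffices (fun k => Qrec p z (k + 1)) = strongClosedForm p z t from congrFun this k
  refine eq_of_recurrenceDefect_eq (s := 1) (c := p * (1 - p) * z ^ 2) ?_ ?_ ?_
  · funext n
    rw [recurrenceDefect_Qrec, recurrenceDefect_strongClosedForm hp hz ht ht2]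
  · rw [strongClosedForm_zero hp hz ht]
    rfl
  · rw [strongClosedForm_one hp hz ht ht2]
    simp only [Qrec]
    ring

end StrongClosedForm

theorem one_sub_four_mul_sq_pos {a z : ℝ} (hz0 : 0 < z) (hz : z < 1 / (2 * Real.sqrt a)) :
    0 < 1 - 4 * a * z ^ 2 := by
  rcases le_or_gt a 0 with ha | ha
  · nlinarith [sq_nonneg z]
  · have hsa : 0 < Real.sqrt a := Real.sqrt_pos.mpr ha
    have hlt : 2 * Real.sqrt a * z < 1 := by
      rwa [lt_div_iff₀ (by positivity), mul_comm] at hz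
    have hsq : (2 * Real.sqrt a * z) ^ 2 = 4 * a * z ^ 2 := by
      rw [mul_pow, mul_pow, Real.sq_sqrt ha.le]; ring
    nlinarith [mul_pos (mul_pos two_pos hsa) hz0]

theorem strong_Q_closed_form_general (p q : ℝ) (hp0 : 0 < p) (hq : q = 1 - p)
    (z : ℝ) (hz0 : 0 < z) (hz1 : z < 1 / (2 * Real.sqrt (p * q))) (hz2 : z ≠ 1)
    (t u v : ℝ) (ht : t = Real.sqrt (1 - 4 * p * q * z ^ 2))
    (hu : u = (1 + t) / (2 * p) * (-1 + 2 * p + t))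
    (hv : v = (1 - t) / (2 * p) * (1 - 2 * p + t)) :
    ∀ k : ℕ,
      Qrec p z (k + 1) =
        1 / (2 * t * (1 - z)) *
          (u * ((1 + t) / 2) ^ k + v * ((1 - t) / 2) ^ k - 2 * t * z * (p * z) ^ k) := by
  have hpos : 0 < 1 - 4 * (p * q) * z ^ 2 := one_sub_four_mul_sq_pos hz0 hz1
  rw [← mul_assoc] at hpos
  have ht0 : t ≠ 0 := ht ▸ (Real.sqrt_pos.mpr hpos).ne'
  have ht2 : t ^ 2 = 1 - 4 * p * (1 - p) * z ^ 2 := by rw [ht, Real.sq_sqrt hpos.le, hq]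
  subst hu hv
  exact Qrec_succ_eq_strongClosedForm hp0.ne' (sub_ne_zero.mpr hz2.symm) ht0 ht2

/-- Explicit solution of the strong-scenario numerator recurrence: with
`t = √(1 - 4 p q z²)`, `u = ((1+t)/(2p))(-1+2p+t)`, `v = ((1-t)/(2p))(1-2p+t)`,
`Q_k(z) = (1/(2t(1-z))) [u ((1+t)/2)^k + v ((1-t)/2)^k - 2 t z (p z)^k]` for all `k ≥ 0`. -/
theorem strong_Q_closed_form (p q : ℝ) (hp0 : 0 < p) (hp : p < 1 / 2) (hq : q = 1 - p)
    (z : ℝ) (hz0 : 0 < z) (hz1 : z < 1 / (2 * Real.sqrt (p * q))) (hz2 : z ≠ 1)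
    (t u v : ℝ) (ht : t = Real.sqrt (1 - 4 * p * q * z ^ 2))
    (hu : u = (1 + t) / (2 * p) * (-1 + 2 * p + t))
    (hv : v = (1 - t) / (2 * p) * (1 - 2 * p + t)) :
    ∀ k : ℕ,
      Qrec p z (k + 1) =
        1 / (2 * t * (1 - z)) *
          (u * ((1 + t) / 2) ^ k + v * ((1 - t) / 2) ^ k - 2 * t * z * (p * z) ^ k) :=
  strong_Q_closed_form_general p q hp0 hq z hz0 hz1 hz2 t u v ht hu hv
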